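/- Let γ ∈ {1, −1} and define on the open set Ω = {(t,x,u) ∈ ℝ³ : e^{2x} − e^{x}u − γ ≠ 0} the vector fields (with no ∂_u-component): L_0 = ∂_t; L_1 = e^{-t}(∂_t + ∂_x); L_{-1} = e^{t}(1 + γ e^{-2x}) ∂_t + e^{t}(−1 + γ e^{-2x} + u e^{-x}) ∂_x; L_2 = e^{-2t+x}(e^{x} − u)(e^{2x} − e^{x}u − γ)^{−1} ∂_t + e^{-2t+x}(2e^{x} − u)(e^{2x} − e^{x}u − γ)^{−1} ∂_x; L_{-2} = e^{2t−3x}(e^{3x} + 3γ e^{x} − γ u) ∂_t + e^{2t−3x}(2e^{x} − u)(−e^{2x} + e^{x}u + γ) ∂_x. Then at every point of Ω the following commutation relations hold: [L_0, L_1] = −L_1, [L_0, L_{-1}] = L_{-1}, [L_1, L_{-1}] = 2L_0, [L_0, L_2] = −2L_2, [L_{-1}, L_2] = −3L_1, [L_1, L_{-2}] = 3L_{-1}, [L_0, L_{-2}] = 2L_{-2}, and [L_2, L_{-2}] = 4L_0. (Generators of the realization 𝔚₇ from Theorem 1, with φ(u) = u.) -/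

import Mathlib

noncomputable section

/-- Partial derivative of `f : ℝ³ → ℝ` (curried) in the first variable `t`. -/
def pt (f : ℝ → ℝ → ℝ → ℝ) (t x u : ℝ) : ℝ := deriv (fun s => f s x u) t

/-- Partial derivative in the second variable `x`. -/
def px (f : ℝ → ℝ → ℝ → ℝ) (t x u : ℝ) : ℝ := deriv (fun s => f t s u) x

/-- Partial derivative in the third variable `u`. -/
def pu (f : ℝ → ℝ → ℝ → ℝ) (t x u : ℝ) : ℝ := deriv (fun s => f t x s) u

/-- A vector field `τ ∂_t + ξ ∂_x + η ∂_u` on ℝ³ with coordinates `(t,x,u)`. -/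
structure VF3 where
  tau : ℝ → ℝ → ℝ → ℝ
  xi  : ℝ → ℝ → ℝ → ℝ
  eta : ℝ → ℝ → ℝ → ℝ

/-- Action of a vector field on a function: `X(F) = τ F_t + ξ F_x + η F_u`. -/
def VF3.app (X : VF3) (F : ℝ → ℝ → ℝ → ℝ) (t x u : ℝ) : ℝ :=
  X.tau t x u * pt F t x u + X.xi t x u * px F t x u + X.eta t x u * pu F t x u

/-- Lie bracket of vector fields on ℝ³. -/
def VF3.bracket (X Y : VF3) : VF3 where
  tau := fun t x u => X.app Y.tau t x u - Y.app X.tau t x u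
  xi  := fun t x u => X.app Y.xi t x u - Y.app X.xi t x u
  eta := fun t x u => X.app Y.eta t x u - Y.app X.eta t x u

/-- Scalar multiple of a vector field. -/
def VF3.smul (c : ℝ) (X : VF3) : VF3 where
  tau := fun t x u => c * X.tau t x u
  xi  := fun t x u => c * X.xi t x u
  eta := fun t x u => c * X.eta t x u

/-- Smoothness of a coefficient function on ℝ³. -/
def Smooth3 (f : ℝ → ℝ → ℝ → ℝ) : Prop :=
  ContDiff ℝ (⊤ : ℕ∞) fun p : ℝ × ℝ × ℝ => f p.1 p.2.1 p.2.2

/-- Pointwise commutation relation: `[X,Y] = c·Z` at the point `(t,x,u)`. -/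
def BracketEqAt (X Y Z : VF3) (c : ℝ) (t x u : ℝ) : Prop :=
  (VF3.bracket X Y).tau t x u = c * Z.tau t x u ∧
  (VF3.bracket X Y).xi t x u = c * Z.xi t x u ∧
  (VF3.bracket X Y).eta t x u = c * Z.eta t x u

/-- `L₀ = ∂_t`. -/
def M0 : VF3 := ⟨fun _ _ _ => 1, fun _ _ _ => 0, fun _ _ _ => 0⟩

/-- `L₁ = e^{-t}(∂_t + ∂_x)`. -/
def M1 : VF3 := ⟨fun t _ _ => Real.exp (-t), fun t _ _ => Real.exp (-t), fun _ _ _ => 0⟩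

/-- `L₋₁ = e^t(1 + γe^{-2x})∂_t + e^t(-1 + γe^{-2x} + u e^{-x})∂_x`. -/
def Mm1 (γ : ℝ) : VF3 :=
  ⟨fun t x _ => Real.exp t * (1 + γ * Real.exp (-2 * x)),
   fun t x u => Real.exp t * (-1 + γ * Real.exp (-2 * x) + u * Real.exp (-x)),
   fun _ _ _ => 0⟩

/-- `L₂ = e^{-2t+x}(e^x - u)(e^{2x} - e^x u - γ)⁻¹ ∂_t
        + e^{-2t+x}(2e^x - u)(e^{2x} - e^x u - γ)⁻¹ ∂_x`. -/
def M2 (γ : ℝ) : VF3 :=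
  ⟨fun t x u => Real.exp (-2 * t + x) * (Real.exp x - u) *
      (Real.exp (2 * x) - Real.exp x * u - γ)⁻¹,
   fun t x u => Real.exp (-2 * t + x) * (2 * Real.exp x - u) *
      (Real.exp (2 * x) - Real.exp x * u - γ)⁻¹,
   fun _ _ _ => 0⟩

/-- `L₋₂ = e^{2t-3x}(e^{3x} + 3γe^x - γu) ∂_t
         + e^{2t-3x}(2e^x - u)(-e^{2x} + e^x u + γ) ∂_x`. -/
def Mm2 (γ : ℝ) : VF3 :=
  ⟨fun t x u => Real.exp (2 * t - 3 * x) *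
      (Real.exp (3 * x) + 3 * γ * Real.exp x - γ * u),
   fun t x u => Real.exp (2 * t - 3 * x) * (2 * Real.exp x - u) *
      (-Real.exp (2 * x) + Real.exp x * u + γ),
   fun _ _ _ => 0⟩

/-! ### Auxiliary derivative lemmas -/

lemma hasDerivAt_exp_lin (a b x : ℝ) :
    HasDerivAt (fun s => Real.exp (a * s + b)) (a * Real.exp (a * x + b)) x := by
  simpa [mul_comm] using (((hasDerivAt_id x).const_mul a).add_const b).exp

lemma ptM1tau (t x u : ℝ) : pt M1.tau t x u = -Real.exp (-t) := by
  simp only [pt, M1]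
  have : HasDerivAt (fun s : ℝ => Real.exp (-s)) (-Real.exp (-t)) t := by
    simpa using hasDerivAt_exp_lin (-1) 0 t
  exact this.deriv

lemma ptM1xi (t x u : ℝ) : pt M1.xi t x u = -Real.exp (-t) := by
  simp only [pt, M1]
  have : HasDerivAt (fun s : ℝ => Real.exp (-s)) (-Real.exp (-t)) t := by
    simpa using hasDerivAt_exp_lin (-1) 0 t
  exact this.deriv

lemma ptMm1tau (g t x u : ℝ) :
    pt (Mm1 g).tau t x u = Real.exp t * (1 + g * Real.exp (-2 * x)) := by
  simp only [pt, Mm1]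
  exact ((Real.hasDerivAt_exp t).mul_const (1 + g * Real.exp (-2 * x))).deriv

lemma ptMm1xi (g t x u : ℝ) :
    pt (Mm1 g).xi t x u = Real.exp t * (-1 + g * Real.exp (-2 * x) + u * Real.exp (-x)) := by
  simp only [pt, Mm1]
  exact ((Real.hasDerivAt_exp t).mul_const (-1 + g * Real.exp (-2 * x) + u * Real.exp (-x))).deriv

lemma hdm2 (x : ℝ) : HasDerivAt (fun s : ℝ => Real.exp (-2 * s)) (-2 * Real.exp (-2 * x)) x := by
  simpa using hasDerivAt_exp_lin (-2) 0 x

lemma hdm1 (x : ℝ) : HasDerivAt (fun s : ℝ => Real.exp (-s)) (-Real.exp (-x)) x := by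
  simpa using hasDerivAt_exp_lin (-1) 0 x

lemma hd2 (x : ℝ) : HasDerivAt (fun s : ℝ => Real.exp (2 * s)) (2 * Real.exp (2 * x)) x := by
  simpa using hasDerivAt_exp_lin 2 0 x

lemma hd3 (x : ℝ) : HasDerivAt (fun s : ℝ => Real.exp (3 * s)) (3 * Real.exp (3 * x)) x := by
  simpa using hasDerivAt_exp_lin 3 0 x

lemma pxMm1tau (g t x u : ℝ) :
    px (Mm1 g).tau t x u = Real.exp t * (g * (-2 * Real.exp (-2 * x))) := by
  simp only [px, Mm1]
  exact (((hdm2 x).const_mul g).const_add 1).const_mul (Real.exp t) |>.deriv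

lemma pxMm1xi (g t x u : ℝ) :
    px (Mm1 g).xi t x u
      = Real.exp t * (g * (-2 * Real.exp (-2 * x)) + u * -Real.exp (-x)) := by
  simp only [px, Mm1]
  exact ((((hdm2 x).const_mul g).const_add (-1)).add ((hdm1 x).const_mul u)).const_mul
    (Real.exp t) |>.deriv

lemma ptM2tau (g t x u : ℝ) :
    pt (M2 g).tau t x u
      = -2 * Real.exp (-2 * t + x) * (Real.exp x - u) *
          (Real.exp (2 * x) - Real.exp x * u - g)⁻¹ := by
  simp only [pt, M2]
  exact ((hasDerivAt_exp_lin (-2) x t).mul_const (Real.exp x - u)).mul_const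
    (Real.exp (2 * x) - Real.exp x * u - g)⁻¹ |>.deriv

lemma ptM2xi (g t x u : ℝ) :
    pt (M2 g).xi t x u
      = -2 * Real.exp (-2 * t + x) * (2 * Real.exp x - u) *
          (Real.exp (2 * x) - Real.exp x * u - g)⁻¹ := by
  simp only [pt, M2]
  exact ((hasDerivAt_exp_lin (-2) x t).mul_const (2 * Real.exp x - u)).mul_const
    (Real.exp (2 * x) - Real.exp x * u - g)⁻¹ |>.deriv

lemma hdexp23 (t x : ℝ) :
    HasDerivAt (fun s : ℝ => Real.exp (2 * s - 3 * x)) (2 * Real.exp (2 * t - 3 * x)) t := by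
  have := (((hasDerivAt_id t).const_mul (2:ℝ)).sub_const (3 * x)).exp
  simpa [mul_comm] using this

lemma ptMm2tau (g t x u : ℝ) :
    pt (Mm2 g).tau t x u
      = 2 * Real.exp (2 * t - 3 * x) * (Real.exp (3 * x) + 3 * g * Real.exp x - g * u) := by
  simp only [pt, Mm2]
  exact ((hdexp23 t x).mul_const (Real.exp (3 * x) + 3 * g * Real.exp x - g * u)).deriv

lemma ptMm2xi (g t x u : ℝ) :
    pt (Mm2 g).xi t x u
      = 2 * Real.exp (2 * t - 3 * x) * (2 * Real.exp x - u) *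
          (-Real.exp (2 * x) + Real.exp x * u + g) := by
  simp only [pt, Mm2]
  exact ((hdexp23 t x).mul_const (2 * Real.exp x - u)).mul_const
    (-Real.exp (2 * x) + Real.exp x * u + g) |>.deriv

lemma hdexpC (t x : ℝ) :
    HasDerivAt (fun s : ℝ => Real.exp (-2 * t + s)) (Real.exp (-2 * t + x)) x := by
  simpa using ((hasDerivAt_id x).const_add (-2 * t)).exp

lemma hdD (g x u : ℝ) :
    HasDerivAt (fun s : ℝ => Real.exp (2 * s) - Real.exp s * u - g)
      (2 * Real.exp (2 * x) - Real.exp x * u) x :=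
  ((hd2 x).sub ((Real.hasDerivAt_exp x).mul_const u)).sub_const g

lemma pxM2tau (g t x u : ℝ) (h : Real.exp (2 * x) - Real.exp x * u - g ≠ 0) :
    px (M2 g).tau t x u
      = (Real.exp (-2 * t + x) * (Real.exp x - u) + Real.exp (-2 * t + x) * Real.exp x) *
          (Real.exp (2 * x) - Real.exp x * u - g)⁻¹ +
        Real.exp (-2 * t + x) * (Real.exp x - u) *
          (-(2 * Real.exp (2 * x) - Real.exp x * u) /
            (Real.exp (2 * x) - Real.exp x * u - g) ^ 2) := by
  simp only [px, M2]
  exact (((hdexpC t x).mul ((Real.hasDerivAt_exp x).sub_const u)).mul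
    ((hdD g x u).inv h)).deriv

lemma pxM2xi (g t x u : ℝ) (h : Real.exp (2 * x) - Real.exp x * u - g ≠ 0) :
    px (M2 g).xi t x u
      = (Real.exp (-2 * t + x) * (2 * Real.exp x - u) +
            Real.exp (-2 * t + x) * (2 * Real.exp x)) *
          (Real.exp (2 * x) - Real.exp x * u - g)⁻¹ +
        Real.exp (-2 * t + x) * (2 * Real.exp x - u) *
          (-(2 * Real.exp (2 * x) - Real.exp x * u) /
            (Real.exp (2 * x) - Real.exp x * u - g) ^ 2) := by
  simp only [px, M2]
  exact (((hdexpC t x).mul (((Real.hasDerivAt_exp x).const_mul 2).sub_const u)).mul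
    ((hdD g x u).inv h)).deriv

lemma hdexp23x (t x : ℝ) :
    HasDerivAt (fun s : ℝ => Real.exp (2 * t - 3 * s)) (-3 * Real.exp (2 * t - 3 * x)) x := by
  have := (((hasDerivAt_id x).const_mul (3:ℝ)).const_sub (2 * t)).exp
  simpa [mul_comm] using this

lemma pxMm2tau (g t x u : ℝ) :
    px (Mm2 g).tau t x u
      = -3 * Real.exp (2 * t - 3 * x) *
            (Real.exp (3 * x) + 3 * g * Real.exp x - g * u) +
        Real.exp (2 * t - 3 * x) * (3 * Real.exp (3 * x) + 3 * g * Real.exp x) := by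
  simp only [px, Mm2]
  exact ((hdexp23x t x).mul
    (((hd3 x).add ((Real.hasDerivAt_exp x).const_mul (3 * g))).sub_const (g * u))).deriv

lemma pxMm2xi (g t x u : ℝ) :
    px (Mm2 g).xi t x u
      = (-3 * Real.exp (2 * t - 3 * x) * (2 * Real.exp x - u) +
            Real.exp (2 * t - 3 * x) * (2 * Real.exp x)) *
          (-Real.exp (2 * x) + Real.exp x * u + g) +
        Real.exp (2 * t - 3 * x) * (2 * Real.exp x - u) *
          (-(2 * Real.exp (2 * x)) + Real.exp x * u) := by
  simp only [px, Mm2]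
  exact (((hdexp23x t x).mul (((Real.hasDerivAt_exp x).const_mul 2).sub_const u)).mul
    (((hd2 x).neg.add ((Real.hasDerivAt_exp x).mul_const u)).add_const g)).deriv


set_option maxHeartbeats 4000000 in
/-- Generators of the realization 𝔚₇ (with `φ(u) = u`): on
`Ω = {(t,x,u) : e^{2x} - e^x u - γ ≠ 0}` the commutation relations
`[L₀,L₁] = -L₁`, `[L₀,L₋₁] = L₋₁`, `[L₁,L₋₁] = 2L₀`, `[L₀,L₂] = -2L₂`,
`[L₋₁,L₂] = -3L₁`, `[L₁,L₋₂] = 3L₋₁`, `[L₀,L₋₂] = 2L₋₂`, `[L₂,L₋₂] = 4L₀` hold. -/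

theorem witt_realization_W7_generators (γ : ℝ) (hγ : γ = 1 ∨ γ = -1)
    (t x u : ℝ) (h : Real.exp (2 * x) - Real.exp x * u - γ ≠ 0) :
    BracketEqAt M0 M1 M1 (-1) t x u ∧
    BracketEqAt M0 (Mm1 γ) (Mm1 γ) 1 t x u ∧
    BracketEqAt M1 (Mm1 γ) M0 2 t x u ∧
    BracketEqAt M0 (M2 γ) (M2 γ) (-2) t x u ∧
    BracketEqAt (Mm1 γ) (M2 γ) M1 (-3) t x u ∧
    BracketEqAt M1 (Mm2 γ) (Mm1 γ) 3 t x u ∧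
    BracketEqAt M0 (Mm2 γ) (Mm2 γ) 2 t x u ∧
    BracketEqAt (M2 γ) (Mm2 γ) M0 4 t x u := by
  have E1 : Real.exp (-t) = (Real.exp t)⁻¹ := Real.exp_neg t
  have E2 : Real.exp (-2 * x) = (Real.exp x)⁻¹ * (Real.exp x)⁻¹ := by
    rw [show (-2 * x : ℝ) = -x + -x by ring, Real.exp_add, Real.exp_neg]
  have E3 : Real.exp (-x) = (Real.exp x)⁻¹ := Real.exp_neg x
  have E4 : Real.exp (2 * x) = Real.exp x * Real.exp x := by
    rw [show ((2:ℝ) * x) = x + x by ring, Real.exp_add]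
  have E5 : Real.exp (3 * x) = Real.exp x * (Real.exp x * Real.exp x) := by
    rw [show ((3:ℝ) * x) = x + (x + x) by ring, Real.exp_add, Real.exp_add]
  have E6 : Real.exp (-2 * t + x) = (Real.exp t)⁻¹ * ((Real.exp t)⁻¹ * Real.exp x) := by
    rw [show (-2 * t + x : ℝ) = -t + (-t + x) by ring, Real.exp_add, Real.exp_add,
      Real.exp_neg]
  have E7 : Real.exp (2 * t - 3 * x)
      = Real.exp t * (Real.exp t * ((Real.exp x)⁻¹ * ((Real.exp x)⁻¹ * (Real.exp x)⁻¹))) := by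
    rw [show (2 * t - 3 * x : ℝ) = t + (t + (-x + (-x + -x))) by ring, Real.exp_add,
      Real.exp_add, Real.exp_add, Real.exp_add, Real.exp_neg]
  have hx := Real.exp_ne_zero x
  have ht := Real.exp_ne_zero t
  have h' := h
  rw [E4] at h'
  simp only [BracketEqAt]
  refine ⟨⟨?_, ?_, ?_⟩, ⟨?_, ?_, ?_⟩, ⟨?_, ?_, ?_⟩, ⟨?_, ?_, ?_⟩, ⟨?_, ?_, ?_⟩,
    ⟨?_, ?_, ?_⟩, ⟨?_, ?_, ?_⟩, ⟨?_, ?_, ?_⟩⟩ <;>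
  · simp only [VF3.bracket, VF3.app, ptM1tau, ptM1xi, ptMm1tau, ptMm1xi, pxMm1tau,
      pxMm1xi, ptM2tau, ptM2xi, ptMm2tau, ptMm2xi, pxM2tau _ t x u h, pxM2xi _ t x u h,
      pxMm2tau, pxMm2xi]
    simp only [M0, M1, Mm1, M2, Mm2, pt, px, pu, deriv_const', deriv_const]
    simp only [E1, E2, E3, E4, E5, E6, E7]
    have h4 : Real.exp x * (Real.exp x - u) - γ ≠ 0 := by
      rw [mul_sub]; exact h'
    field_simp [h', h4, hx, ht]
    try ring
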